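/- Let (Ω, μ) be a probability space and X : ℕ → Ω → ℝ an i.i.d. sequence with μ(X_i = Δ_H) = p−ε and μ(X_i = −Δ_T) = q+ε (the not-heavy-coin log-likelihood increments). Let S_n = Σ_{i<n} X_i, fix B > 0, and let τ = inf{n ≥ 1 : S_n ≥ B or S_n < 0}. Then the expected number of steps to absorption satisfies E[τ] ≤ 2·(Δ_H+Δ_T) / (Δ_T·(q+ε) − Δ_H·(p−ε)). -/

import Mathlib

/-!
Under the not-heavy coin the increments have negative mean `-d`, where
`d = Δ_T (q+ε) - Δ_H (p-ε) > 0` by `y log (x/y) < x - y < x log (x/y)`.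
Let `A_n` be the event that the walk has not been absorbed by time `n`. It is determined by
`X_0, …, X_{n-1}`, hence independent of `X_n`, so `𝔼[Σ_{n<N} 1_{A_n} X_n] = -d Σ_{n<N} P(A_n)`.
The left-hand side is the walk stopped at `min(τ, N)`, which is at least `-Δ_T`: just before
absorption the walk is still nonnegative and a step is at least `-Δ_T`. Hence
`𝔼[τ] = Σ_n P(A_n) ≤ Δ_T / d ≤ 2 (Δ_H + Δ_T) / d`.
-/

open MeasureTheory ProbabilityTheory Finset

lemma Real.mul_log_div_lt_sub {x y : ℝ} (hx : 0 < x) (hy : 0 < y) (hxy : x ≠ y) :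
    y * Real.log (x / y) < x - y := by
  have hlog := Real.log_lt_sub_one_of_pos (div_pos hx hy)
    (by rwa [ne_eq, div_eq_one_iff_eq hy.ne'])
  calc y * Real.log (x / y) < y * (x / y - 1) := mul_lt_mul_of_pos_left hlog hy
    _ = x - y := by field_simp

lemma Real.sub_lt_mul_log_div {x y : ℝ} (hx : 0 < x) (hy : 0 < y) (hxy : x ≠ y) :
    x - y < x * Real.log (x / y) := by
  have := Real.mul_log_div_lt_sub hy hx hxy.symm
  rw [← inv_div, Real.log_inv] at this
  linarith

lemma log_likelihood_drift_pos {ε x y : ℝ} (hε : 0 < ε) (hx : ε < x) (hy : ε < y) :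
    0 < Real.log ((y + ε) / (y - ε)) * (y + ε) - Real.log ((x + ε) / (x - ε)) * (x - ε) := by
  have hup := Real.mul_log_div_lt_sub (x := x + ε) (y := x - ε) (by linarith) (by linarith)
    (by linarith)
  have hdown := Real.sub_lt_mul_log_div (x := y + ε) (y := y - ε) (by linarith) (by linarith)
    (by linarith)
  linarith

open Classical in
lemma Set.encard_setOf_forall_lt (s : Set ℕ) :
    ({n | ∀ k ∈ s, n < k}.encard : ENNReal)
      = if s.Nonempty then ((sInf s : ℕ) : ENNReal) else ⊤ := by
  split_ifs with hs
  · have : {n | ∀ k ∈ s, n < k} = Set.Iio (sInf s) := by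
      ext n
      exact ⟨fun h => h _ (Nat.sInf_mem hs), fun h k hk => h.trans_le (Nat.sInf_le hk)⟩
    rw [this, ← Finset.coe_range, Set.encard_coe_eq_coe_finsetCard]
    simp
  · have : {n | ∀ k ∈ s, n < k} = Set.univ := by
      simp [Set.not_nonempty_iff_eq_empty.mp hs]
    simp [this]

lemma neg_le_sum_indicator_of_isLowerSet {s : Set ℕ} (hs : IsLowerSet s) {x : ℕ → ℝ} {c : ℝ}
    (hc : 0 ≤ c) (hpos : ∀ n ∈ s, 0 ≤ ∑ i ∈ range n, x i) (hstep : ∀ n ∈ s, -c ≤ x n)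
    (N : ℕ) : -c ≤ ∑ n ∈ range N, s.indicator x n := by
  induction N with
  | zero => simpa using hc
  | succ N ih =>
    rw [sum_range_succ]
    by_cases hN : N ∈ s
    · have hsum : ∑ n ∈ range N, s.indicator x n = ∑ n ∈ range N, x n :=
        sum_congr rfl fun n hn => Set.indicator_of_mem (hs (mem_range.mp hn).le hN) x
      rw [hsum, Set.indicator_of_mem hN]
      linarith [hpos N hN, hstep N hN]
    · rw [Set.indicator_of_notMem hN, add_zero]
      exact ih

def exitSet (B : ℝ) (x : ℕ → ℝ) : Set ℕ :=
  {n | 1 ≤ n ∧ (B ≤ ∑ i ∈ range n, x i ∨ ∑ i ∈ range n, x i < 0)}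

lemma forall_mem_exitSet_lt_iff {B : ℝ} {x : ℕ → ℝ} {n : ℕ} :
    (∀ k ∈ exitSet B x, n < k) ↔ ∀ k ∈ Icc 1 n, ∑ i ∈ range k, x i ∈ Set.Ico 0 B := by
  simp only [exitSet, Set.mem_ofPred_eq, mem_Icc, Set.mem_Ico, and_imp]
  constructor
  · intro h k hk1 hkn
    by_contra hk
    exact (h k hk1 (by rw [not_and_or, not_le, not_lt] at hk; tauto)).not_ge hkn
  · intro h k hk1 hk
    by_contra hkn
    have := h k hk1 (not_lt.mp hkn)
    rcases hk with hk | hk <;> linarith [this.1, this.2]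

lemma sum_range_nonneg_of_forall_mem_exitSet_lt {B : ℝ} {x : ℕ → ℝ} {n : ℕ}
    (h : ∀ k ∈ exitSet B x, n < k) : 0 ≤ ∑ i ∈ range n, x i := by
  rcases n.eq_zero_or_pos with rfl | hn
  · simp
  · exact (forall_mem_exitSet_lt_iff.mp h n (mem_Icc.mpr ⟨hn, le_rfl⟩)).1

lemma measurableSet_forall_mem_exitSet_lt {Ω : Type*} (X : ℕ → Ω → ℝ) (B : ℝ) (n : ℕ) :
    MeasurableSet[⨆ i ∈ {i | i < n}, MeasurableSpace.comap (X i) inferInstance]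
      {ω | ∀ k ∈ exitSet B (X · ω), n < k} := by
  set past := ⨆ i ∈ {i | i < n}, MeasurableSpace.comap (X i) inferInstance
  have hXpast : ∀ i < n, Measurable[past] (X i) := fun i hi =>
    Measurable.of_comap_le <| le_iSup₂ (f := fun i (_ : i ∈ {i | i < n}) =>
      MeasurableSpace.comap (X i) inferInstance) i hi
  have hSpast : ∀ k ≤ n, Measurable[past] fun ω => ∑ i ∈ range k, X i ω := fun k hk =>
    Finset.measurable_sum _ fun i hi => hXpast i ((mem_range.mp hi).trans_le hk)
  simp_rw [forall_mem_exitSet_lt_iff, Set.ofPred_forall]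
  exact MeasurableSet.biInter (Icc 1 n).countable_toSet fun k hk =>
    hSpast k (mem_Icc.mp hk).2 measurableSet_Ico

section

variable {Ω : Type*} [MeasurableSpace Ω] {P : Measure Ω}

lemma ae_eq_or_eq_of_measure_add_eq_one [IsProbabilityMeasure P] {X : Ω → ℝ}
    (hX : Measurable X) {u v : ℝ} (huv : u ≠ v)
    (h : P {ω | X ω = u} + P {ω | X ω = v} = 1) : ∀ᵐ ω ∂P, X ω = u ∨ X ω = v := by
  have hu : MeasurableSet {ω | X ω = u} := hX (measurableSet_singleton u)
  have hv : MeasurableSet {ω | X ω = v} := hX (measurableSet_singleton v)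
  have hdisj : Disjoint {ω | X ω = u} {ω | X ω = v} :=
    Set.disjoint_left.mpr fun ω h1 h2 => huv (h1.symm.trans h2)
  rw [← measure_union hdisj hv, ← prob_compl_eq_zero_iff (hu.union hv)] at h
  exact measure_eq_zero_iff_ae_notMem.mp h |>.mono fun ω hω => by
    simpa [or_iff_not_imp_left] using hω

lemma integrable_of_ae_eq_or_eq [IsFiniteMeasure P] {X : Ω → ℝ} (hX : Measurable X)
    {u v : ℝ} (h : ∀ᵐ ω ∂P, X ω = u ∨ X ω = v) : Integrable X P :=
  .of_bound hX.aestronglyMeasurable (|u| + |v|) <| h.mono fun ω hω => by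
    rcases hω with hω | hω <;> simp [hω]

lemma integral_eq_of_ae_eq_or_eq [IsFiniteMeasure P] {X : Ω → ℝ} (hX : Measurable X)
    {u v : ℝ} (huv : u ≠ v) (h : ∀ᵐ ω ∂P, X ω = u ∨ X ω = v) :
    ∫ ω, X ω ∂P = P.real {ω | X ω = u} * u + P.real {ω | X ω = v} * v := by
  have hu : MeasurableSet {ω | X ω = u} := hX (measurableSet_singleton u)
  have hv : MeasurableSet {ω | X ω = v} := hX (measurableSet_singleton v)
  have hX_eq : X =ᵐ[P] fun ω =>
      {ω | X ω = u}.indicator (fun _ => u) ω + {ω | X ω = v}.indicator (fun _ => v) ω := by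
    filter_upwards [h] with ω hω
    rcases hω with hω | hω <;> simp [hω, huv, huv.symm]
  rw [integral_congr_ae hX_eq, integral_add ((integrable_const u).indicator hu)
    ((integrable_const v).indicator hv), integral_indicator_const _ hu,
    integral_indicator_const _ hv, smul_eq_mul, smul_eq_mul]

lemma ProbabilityTheory.iIndepFun.integral_indicator_eq_mul {ι : Type*} {X : ι → Ω → ℝ}
    (hX : ∀ i, Measurable (X i)) (hindep : iIndepFun X P) {S : Set ι} {j : ι} (hj : j ∉ S)
    {A : Set Ω} (hA : MeasurableSet[⨆ i ∈ S, MeasurableSpace.comap (X i) inferInstance] A) :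
    ∫ ω, A.indicator (X j) ω ∂P = P.real A * ∫ ω, X j ω ∂P := by
  have hpast : Indep (⨆ i ∈ S, MeasurableSpace.comap (X i) inferInstance)
      (⨆ i ∈ ({j} : Set ι), MeasurableSpace.comap (X i) inferInstance) P :=
    indep_iSup_of_disjoint (fun i => (hX i).comap_le) hindep.iIndep
      (Set.disjoint_singleton_right.mpr hj)
  have hAX : IndepFun (A.indicator (1 : Ω → ℝ)) (X j) P := by
    refine indep_of_indep_of_le_right (indep_of_indep_of_le_left hpast ?_) ?_
    · exact (Measurable.indicator (measurable_const (a := (1 : ℝ))) hA).comap_le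
    · exact le_iSup₂ (f := fun i (_ : i ∈ ({j} : Set ι)) =>
        MeasurableSpace.comap (X i) inferInstance) j rfl
  have hAm : MeasurableSet A := iSup₂_le (fun i _ => (hX i).comap_le) A hA
  calc ∫ ω, A.indicator (X j) ω ∂P = ∫ ω, (A.indicator (1 : Ω → ℝ) * X j) ω ∂P := by
        congr 1; ext ω; by_cases hω : ω ∈ A <;> simp [hω]
    _ = P.real A * ∫ ω, X j ω ∂P := by
        rw [hAX.integral_mul_eq_mul_integral (measurable_const.indicator hAm).aestronglyMeasurable
          (hX j).aestronglyMeasurable, integral_indicator_one hAm]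

open Classical in
lemma lintegral_ite_nonempty_sInf_eq_tsum {T : Ω → Set ℕ}
    (hT : ∀ n, MeasurableSet {ω | ∀ k ∈ T ω, n < k}) :
    ∫⁻ ω, (if (T ω).Nonempty then ((sInf (T ω) : ℕ) : ENNReal) else ⊤) ∂P
      = ∑' n, P {ω | ∀ k ∈ T ω, n < k} := by
  have hpt : ∀ ω, (if (T ω).Nonempty then ((sInf (T ω) : ℕ) : ENNReal) else ⊤)
      = ∑' n, {ω | ∀ k ∈ T ω, n < k}.indicator (fun _ => 1) ω := fun ω => by
    rw [← Set.encard_setOf_forall_lt, ← ENNReal.tsum_set_one, _root_.tsum_subtype _ (fun _ => 1)]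
    rfl
  simp_rw [hpt]
  rw [lintegral_tsum fun n => (measurable_const.indicator (hT n)).aemeasurable]
  exact tsum_congr fun n => lintegral_indicator_one (hT n)

lemma sum_measureReal_forall_mem_exitSet_lt_le [IsProbabilityMeasure P] {X : ℕ → Ω → ℝ}
    (hX : ∀ i, Measurable (X i)) (hindep : iIndepFun X P) (hint : ∀ i, Integrable (X i) P)
    {c d : ℝ} (hd : 0 ≤ d) (hdrift : ∀ i, ∫ ω, X i ω ∂P ≤ -d)
    (hlow : ∀ i, ∀ᵐ ω ∂P, -c ≤ X i ω) (B : ℝ) (N : ℕ) :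
    d * ∑ n ∈ range N, P.real {ω | ∀ k ∈ exitSet B (X · ω), n < k} ≤ c := by
  set A : ℕ → Set Ω := fun n => {ω | ∀ k ∈ exitSet B (X · ω), n < k}
  have hA : ∀ n, MeasurableSet (A n) := fun n =>
    iSup₂_le (fun i _ => (hX i).comap_le) _ (measurableSet_forall_mem_exitSet_lt X B n)
  have hc : 0 ≤ c := by
    have := integral_mono_ae (integrable_const (-c)) (hint 0) (hlow 0)
    simp only [integral_const, probReal_univ, one_smul] at this
    linarith [hdrift 0]
  have hstopped : ∀ᵐ ω ∂P, -c ≤ ∑ n ∈ range N, (A n).indicator (X n) ω := by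
    filter_upwards [ae_all_iff.mpr hlow] with ω hω
    exact neg_le_sum_indicator_of_isLowerSet
      (fun m n hnm (hm : ∀ k ∈ exitSet B (X · ω), m < k) k hk => hnm.trans_lt (hm k hk)) hc
      (fun n hn => sum_range_nonneg_of_forall_mem_exitSet_lt hn) (fun n _ => hω n) N
  have hint_stopped : ∀ n, Integrable ((A n).indicator (X n)) P :=
    fun n => (hint n).indicator (hA n)
  calc d * ∑ n ∈ range N, P.real (A n) = -∑ n ∈ range N, P.real (A n) * -d := by
        rw [mul_sum, ← sum_neg_distrib]; congr 1; ext n; ring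
    _ ≤ -∑ n ∈ range N, P.real (A n) * ∫ ω, X n ω ∂P := by
        gcongr with n; exact hdrift n
    _ = -∫ ω, ∑ n ∈ range N, (A n).indicator (X n) ω ∂P := by
        rw [integral_finsetSum _ fun n _ => hint_stopped n]
        congr 1
        exact sum_congr rfl fun n _ => (hindep.integral_indicator_eq_mul hX
          (S := {i | i < n}) (lt_irrefl n) (measurableSet_forall_mem_exitSet_lt X B n)).symm
    _ ≤ c := by
        have := integral_mono_ae (integrable_const (-c))
          (integrable_finsetSum _ fun n _ => hint_stopped n) hstopped
        simp only [integral_const, probReal_univ, one_smul] at this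
        linarith

open Classical in
theorem lintegral_exitTime_le_div [IsProbabilityMeasure P] {X : ℕ → Ω → ℝ}
    (hX : ∀ i, Measurable (X i)) (hindep : iIndepFun X P) (hint : ∀ i, Integrable (X i) P)
    {c d : ℝ} (hd : 0 < d) (hdrift : ∀ i, ∫ ω, X i ω ∂P ≤ -d)
    (hlow : ∀ i, ∀ᵐ ω ∂P, -c ≤ X i ω) (B : ℝ) :
    ∫⁻ ω, (if (exitSet B (X · ω)).Nonempty then ((sInf (exitSet B (X · ω)) : ℕ) : ENNReal)
        else ⊤) ∂P ≤ ENNReal.ofReal (c / d) := by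
  have hA : ∀ n, MeasurableSet {ω | ∀ k ∈ exitSet B (X · ω), n < k} := fun n =>
    iSup₂_le (fun i _ => (hX i).comap_le) _ (measurableSet_forall_mem_exitSet_lt X B n)
  rw [lintegral_ite_nonempty_sInf_eq_tsum hA]
  refine ENNReal.tsum_le_of_sum_range_le fun N => ?_
  rw [← ENNReal.ofReal_toReal (ENNReal.sum_ne_top.mpr fun n _ => measure_ne_top P _),
    ENNReal.toReal_sum fun n _ => measure_ne_top P _]
  exact ENNReal.ofReal_le_ofReal <| (le_div_iff₀' hd).mpr <|
    sum_measureReal_forall_mem_exitSet_lt_le hX hindep hint hd.le hdrift hlow B N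

end

open Classical in
theorem notheavy_expected_absorption_time_general
    (ε p : ℝ) (hε : ε ∈ Set.Ioo (0:ℝ) (1/2)) (hp : p ∈ Set.Ioo ε (1 - ε))
    (q ΔH ΔT : ℝ) (hq : q = 1 - p)
    (hΔH : ΔH = Real.log ((p + ε) / (p - ε)))
    (hΔT : ΔT = Real.log ((q + ε) / (q - ε)))
    {Ω : Type*} [MeasurableSpace Ω] (P : Measure Ω) [IsProbabilityMeasure P]
    (X : ℕ → Ω → ℝ) (hXmeas : ∀ i, Measurable (X i))
    (hXindep : iIndepFun X P)
    (hXup : ∀ i, P {ω | X i ω = ΔH} = ENNReal.ofReal (p - ε))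
    (hXdown : ∀ i, P {ω | X i ω = -ΔT} = ENNReal.ofReal (q + ε))
    (B : ℝ)
    (S : ℕ → Ω → ℝ) (hS : ∀ n ω, S n ω = ∑ i ∈ Finset.range n, X i ω)
    (hit : Ω → Set ℕ)
    (hhit : ∀ ω, hit ω = {n : ℕ | 1 ≤ n ∧ (B ≤ S n ω ∨ S n ω < 0)}) :
    (∫⁻ ω, (if (hit ω).Nonempty then ((sInf (hit ω) : ℕ) : ENNReal) else ⊤) ∂P)
      ≤ ENNReal.ofReal (2 * (ΔH + ΔT) / (ΔT * (q + ε) - ΔH * (p - ε))) := by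
  obtain ⟨hε0, -⟩ := hε
  obtain ⟨hpε, hp1⟩ := hp
  have hqε : ε < q := by linarith
  obtain rfl : S = fun n ω => ∑ i ∈ range n, X i ω := funext₂ hS
  obtain rfl : hit = fun ω => exitSet B (X · ω) := funext hhit
  have hΔH_pos : 0 < ΔH := hΔH ▸ Real.log_pos ((one_lt_div (by linarith)).mpr (by linarith))
  have hΔT_pos : 0 < ΔT := hΔT ▸ Real.log_pos ((one_lt_div (by linarith)).mpr (by linarith))
  have hd : 0 < ΔT * (q + ε) - ΔH * (p - ε) :=
    hΔH ▸ hΔT ▸ log_likelihood_drift_pos hε0 hpε hqε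
  have hae : ∀ i, ∀ᵐ ω ∂P, X i ω = ΔH ∨ X i ω = -ΔT := fun i =>
    ae_eq_or_eq_of_measure_add_eq_one (hXmeas i) (by linarith) <| by
      rw [hXup, hXdown, ← ENNReal.ofReal_add (by linarith) (by linarith), hq]
      norm_num
  have hmean : ∀ i, ∫ ω, X i ω ∂P = -(ΔT * (q + ε) - ΔH * (p - ε)) := fun i => by
    rw [integral_eq_of_ae_eq_or_eq (hXmeas i) (by linarith) (hae i), measureReal_def,
      measureReal_def, hXup, hXdown, ENNReal.toReal_ofReal (by linarith),
      ENNReal.toReal_ofReal (by linarith)]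
    ring
  calc _ ≤ ENNReal.ofReal (ΔT / (ΔT * (q + ε) - ΔH * (p - ε))) :=
        lintegral_exitTime_le_div hXmeas hXindep
          (fun i => integrable_of_ae_eq_or_eq (hXmeas i) (hae i)) hd (fun i => (hmean i).le)
          (fun i => (hae i).mono fun ω hω => by rcases hω with h | h <;> linarith) B
    _ ≤ _ := ENNReal.ofReal_le_ofReal (div_le_div_of_nonneg_right (by linarith) hd.le)

open Classical in
/-- For the not-heavy-coin log-likelihood random walk (i.i.d. steps `+Δ_H` w.p. `p−ε`,
`−Δ_T` w.p. `q+ε`) with absorbing barriers at `B > 0` above and at every state below `0`,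
the expected number of steps to absorption is at most
`2(Δ_H+Δ_T)/(Δ_T(q+ε) − Δ_H(p−ε))`. -/
theorem notheavy_expected_absorption_time
    (ε p : ℝ) (hε : ε ∈ Set.Ioo (0:ℝ) (1/2)) (hp : p ∈ Set.Ioo ε (1 - ε))
    (q ΔH ΔT : ℝ) (hq : q = 1 - p)
    (hΔH : ΔH = Real.log ((p + ε) / (p - ε)))
    (hΔT : ΔT = Real.log ((q + ε) / (q - ε)))
    {Ω : Type*} [MeasurableSpace Ω] (P : Measure Ω) [IsProbabilityMeasure P]
    (X : ℕ → Ω → ℝ) (hXmeas : ∀ i, Measurable (X i))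
    (hXindep : iIndepFun X P)
    (hXup : ∀ i, P {ω | X i ω = ΔH} = ENNReal.ofReal (p - ε))
    (hXdown : ∀ i, P {ω | X i ω = -ΔT} = ENNReal.ofReal (q + ε))
    (B : ℝ) (hB : 0 < B)
    (S : ℕ → Ω → ℝ) (hS : ∀ n ω, S n ω = ∑ i ∈ Finset.range n, X i ω)
    (hit : Ω → Set ℕ)
    (hhit : ∀ ω, hit ω = {n : ℕ | 1 ≤ n ∧ (B ≤ S n ω ∨ S n ω < 0)}) :
    (∫⁻ ω, (if (hit ω).Nonempty then ((sInf (hit ω) : ℕ) : ENNReal) else ⊤) ∂P)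
      ≤ ENNReal.ofReal (2 * (ΔH + ΔT) / (ΔT * (q + ε) - ΔH * (p - ε))) :=
  notheavy_expected_absorption_time_general ε p hε hp q ΔH ΔT hq hΔH hΔT P X hXmeas hXindep hXup
    hXdown B S hS hit hhit
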